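/- Let N ≥ 1 and let M, N' ∈ ℝ^{N×N} be real symmetric matrices. Then for every k = 1, …, N, |λ_k(M) − λ_k(N')| ≤ ℓ(M − N') · ‖M − N'‖_max, where ℓ(M − N') is the maximum number of nonzero entries in any single row of M − N'. -/

import Mathlib

/-!
Weyl's inequality by dimension counting: the eigenvectors of `M` for its `k`-th and larger
eigenvalues span a space of dimension `N - k`, those of `N'` for its `k`-th and smaller ones a space
of dimension `k + 1`, so the two spaces share a nonzero vector `x`. Its Rayleigh quotients give
`λ_k(M) ‖x‖² ≤ ⟪x, M x⟫` and `⟪x, N' x⟫ ≤ λ_k(N') ‖x‖²`, so `λ_k(M) - λ_k(N')` is at most the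
norm of the quadratic form of `E = M - N'` on the unit sphere. By AM-GM on each term
`x_i E_ij x_j` and the symmetry of `E`, that norm is at most the largest absolute row sum of `E`,
and a row has at most `ℓ(E)` nonzero entries, each of size at most `‖E‖_max`.
-/

open Matrix

/-- The `k`-th smallest eigenvalue (counted with multiplicity) of a real
symmetric (Hermitian) matrix, obtained by sorting the eigenvalues. -/
noncomputable def sortedEig {N : ℕ} {A : Matrix (Fin N) (Fin N) ℝ}
    (hA : A.IsHermitian) : Fin N → ℝ :=
  hA.eigenvalues ∘ Tuple.sort hA.eigenvalues

/-- The max norm `‖M‖_max = max_{i,j} |M_{ij}|`. -/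
noncomputable def maxNorm {N : ℕ} (M : Matrix (Fin N) (Fin N) ℝ) : ℝ :=
  ⨆ i : Fin N, ⨆ j : Fin N, |M i j|

/- `ℓ(M)`: the maximum number of nonzero entries in any single row of `M`. -/
open Classical in
noncomputable def rowNnz {N : ℕ} (M : Matrix (Fin N) (Fin N) ℝ) : ℕ :=
  Finset.univ.sup fun i => (Finset.univ.filter fun j => M i j ≠ 0).card

open scoped RealInnerProductSpace

section Rayleigh

variable {E : Type*} [NormedAddCommGroup E] [InnerProductSpace ℝ E] {ι : Type*} [Fintype ι]
  {T : E →ₗ[ℝ] E} {b : OrthonormalBasis ι ℝ E} {μ : ι → ℝ}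

theorem OrthonormalBasis.inner_eq_zero_of_mem_span_image {s : Set ι} {x : E}
    (hx : x ∈ Submodule.span ℝ (b '' s)) {i : ι} (hi : i ∉ s) : ⟪b i, x⟫ = 0 := by
  have hle : Submodule.span ℝ (b '' s) ≤ (ℝ ∙ b i)ᗮ := by
    rw [Submodule.span_le]
    rintro _ ⟨j, hj, rfl⟩
    exact Submodule.mem_orthogonal_singleton_iff_inner_right.2
      (b.orthonormal.inner_eq_zero fun h => hi (h ▸ hj))
  exact Submodule.mem_orthogonal_singleton_iff_inner_right.1 (hle hx)

theorem OrthonormalBasis.finrank_span_image (b : OrthonormalBasis ι ℝ E) (s : Finset ι) :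
    Module.finrank ℝ (Submodule.span ℝ (b '' s)) = s.card := by
  rw [Set.image_eq_range]
  exact (finrank_span_eq_card (b.orthonormal.linearIndependent.comp _ Subtype.val_injective)).trans
    (Fintype.card_coe s)

theorem inner_apply_eq_sum_of_eigenbasis (hT : T.IsSymmetric) (hb : ∀ i, T (b i) = μ i • b i)
    (x : E) : ⟪x, T x⟫ = ∑ i, μ i * ⟪b i, x⟫ ^ 2 := by
  rw [← b.sum_inner_mul_inner x (T x)]
  refine Finset.sum_congr rfl fun i _ => ?_
  rw [← hT, hb, real_inner_smul_left, real_inner_comm x]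
  ring

theorem mul_norm_sq_le_inner_apply (hT : T.IsSymmetric) (hb : ∀ i, T (b i) = μ i • b i)
    {s : Set ι} {c : ℝ} (hs : ∀ i ∈ s, c ≤ μ i) {x : E} (hx : x ∈ Submodule.span ℝ (b '' s)) :
    c * ‖x‖ ^ 2 ≤ ⟪x, T x⟫ := by
  rw [inner_apply_eq_sum_of_eigenbasis hT hb, ← b.sum_sq_inner_right, Finset.mul_sum]
  refine Finset.sum_le_sum fun i _ => ?_
  by_cases hi : i ∈ s
  · exact mul_le_mul_of_nonneg_right (hs i hi) (sq_nonneg _)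
  · simp [b.inner_eq_zero_of_mem_span_image hx hi]

theorem inner_apply_le_mul_norm_sq (hT : T.IsSymmetric) (hb : ∀ i, T (b i) = μ i • b i)
    {s : Set ι} {c : ℝ} (hs : ∀ i ∈ s, μ i ≤ c) {x : E} (hx : x ∈ Submodule.span ℝ (b '' s)) :
    ⟪x, T x⟫ ≤ c * ‖x‖ ^ 2 := by
  rw [inner_apply_eq_sum_of_eigenbasis hT hb, ← b.sum_sq_inner_right, Finset.mul_sum]
  refine Finset.sum_le_sum fun i _ => ?_
  by_cases hi : i ∈ s
  · exact mul_le_mul_of_nonneg_right (hs i hi) (sq_nonneg _)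
  · simp [b.inner_eq_zero_of_mem_span_image hx hi]

end Rayleigh

theorem Submodule.exists_mem_inf_ne_zero_of_finrank_lt {K V : Type*} [DivisionRing K]
    [AddCommGroup V] [Module K V] [FiniteDimensional K V] (U W : Submodule K V)
    (h : Module.finrank K V < Module.finrank K U + Module.finrank K W) :
    ∃ x ∈ U ⊓ W, x ≠ 0 := by
  have hsup := Submodule.finrank_sup_add_finrank_inf_eq U W
  have hle := Submodule.finrank_le (U ⊔ W)
  refine Submodule.exists_mem_ne_zero_of_ne_bot fun hbot => ?_
  rw [hbot, finrank_bot] at hsup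
  omega

section Weyl

variable {E : Type*} [NormedAddCommGroup E] [InnerProductSpace ℝ E] {n : ℕ}

theorem eigenvalue_le_add_of_inner_apply_le {S T : E →ₗ[ℝ] E} (hS : S.IsSymmetric)
    (hT : T.IsSymmetric) {bS bT : OrthonormalBasis (Fin n) ℝ E} {μ ν : Fin n → ℝ}
    (hμ : Monotone μ) (hν : Monotone ν) (hbS : ∀ i, S (bS i) = μ i • bS i)
    (hbT : ∀ i, T (bT i) = ν i • bT i) {c : ℝ}
    (h : ∀ x, ⟪x, S x⟫ ≤ ⟪x, T x⟫ + c * ‖x‖ ^ 2) (k : Fin n) : μ k ≤ ν k + c := by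
  have := bS.toBasis.finiteDimensional_of_finite
  obtain ⟨x, ⟨hxS, hxT⟩, hx0⟩ := Submodule.exists_mem_inf_ne_zero_of_finrank_lt
    (Submodule.span ℝ (bS '' Finset.Ici k)) (Submodule.span ℝ (bT '' Finset.Iic k)) (by
      rw [bS.finrank_span_image, bT.finrank_span_image, Fin.card_Ici, Fin.card_Iic,
        Module.finrank_eq_card_basis bS.toBasis, Fintype.card_fin]
      omega)
  have hlow : μ k * ‖x‖ ^ 2 ≤ ⟪x, S x⟫ :=
    mul_norm_sq_le_inner_apply hS hbS (fun i hi => hμ (Finset.mem_Ici.1 hi)) hxS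
  have hup : ⟪x, T x⟫ ≤ ν k * ‖x‖ ^ 2 :=
    inner_apply_le_mul_norm_sq hT hbT (fun i hi => hν (Finset.mem_Iic.1 hi)) hxT
  have hpos : 0 < ‖x‖ ^ 2 := by positivity
  nlinarith [h x]

end Weyl

namespace Matrix.IsHermitian

variable {N : ℕ} {A B : Matrix (Fin N) (Fin N) ℝ}

noncomputable def sortedEigenvectorBasis (hA : A.IsHermitian) :
    OrthonormalBasis (Fin N) ℝ (EuclideanSpace ℝ (Fin N)) :=
  hA.eigenvectorBasis.reindex (Tuple.sort hA.eigenvalues).symm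

theorem toEuclideanLin_sortedEigenvectorBasis (hA : A.IsHermitian) (i : Fin N) :
    toEuclideanLin A (hA.sortedEigenvectorBasis i) =
      sortedEig hA i • hA.sortedEigenvectorBasis i := by
  simp only [sortedEigenvectorBasis, OrthonormalBasis.reindex_apply, Equiv.symm_symm]
  exact congrArg (WithLp.toLp 2) (hA.mulVec_eigenvectorBasis _)

theorem sortedEig_le_add (hA : A.IsHermitian) (hB : B.IsHermitian) {c : ℝ}
    (h : ∀ x : Fin N → ℝ, x ⬝ᵥ A *ᵥ x ≤ x ⬝ᵥ B *ᵥ x + c * (x ⬝ᵥ x)) (k : Fin N) :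
    sortedEig hA k ≤ sortedEig hB k + c := by
  refine eigenvalue_le_add_of_inner_apply_le (isSymmetric_toEuclideanLin_iff.2 hA)
    (isSymmetric_toEuclideanLin_iff.2 hB) (Tuple.monotone_sort _) (Tuple.monotone_sort _)
    hA.toEuclideanLin_sortedEigenvectorBasis hB.toEuclideanLin_sortedEigenvectorBasis
    (fun x => ?_) k
  rw [← real_inner_self_eq_norm_sq]
  simpa only [EuclideanSpace.inner_eq_star_dotProduct, ofLp_toLpLin, toLin'_apply, star_trivial,
    dotProduct_comm] using h x

end Matrix.IsHermitian

theorem Matrix.IsSymm.abs_dotProduct_mulVec_le {n : Type*} [Fintype n] {A : Matrix n n ℝ}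
    (hA : A.IsSymm) {R : ℝ} (hR : ∀ i, ∑ j, |A i j| ≤ R) (x : n → ℝ) :
    |x ⬝ᵥ A *ᵥ x| ≤ R * (x ⬝ᵥ x) := by
  have hterm : ∀ i j, |x i * A i j * x j| ≤ |A i j| * ((x i ^ 2 + x j ^ 2) / 2) := fun i j => by
    have hamgm : |x i| * |x j| ≤ (x i ^ 2 + x j ^ 2) / 2 := by
      nlinarith [two_mul_le_add_sq |x i| |x j|, sq_abs (x i), sq_abs (x j)]
    calc |x i * A i j * x j| = |A i j| * (|x i| * |x j|) := by rw [abs_mul, abs_mul]; ring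
      _ ≤ _ := mul_le_mul_of_nonneg_left hamgm (abs_nonneg _)
  have hswap : ∑ i, ∑ j, |A i j| * x j ^ 2 = ∑ i, ∑ j, |A i j| * x i ^ 2 := by
    rw [Finset.sum_comm]
    exact Finset.sum_congr rfl fun i _ => Finset.sum_congr rfl fun j _ => by rw [hA.apply]
  calc |x ⬝ᵥ A *ᵥ x| = |∑ i, ∑ j, x i * A i j * x j| := by
        simp only [dotProduct, mulVec, Finset.mul_sum, mul_assoc]
    _ ≤ ∑ i, ∑ j, |A i j| * ((x i ^ 2 + x j ^ 2) / 2) :=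
        (Finset.abs_sum_le_sum_abs _ _).trans <| Finset.sum_le_sum fun i _ =>
          (Finset.abs_sum_le_sum_abs _ _).trans <| Finset.sum_le_sum fun j _ => hterm i j
    _ = (∑ i, ∑ j, |A i j| * x i ^ 2 + ∑ i, ∑ j, |A i j| * x j ^ 2) / 2 := by
        simp only [← Finset.sum_add_distrib, Finset.sum_div]
        exact Finset.sum_congr rfl fun i _ => Finset.sum_congr rfl fun j _ => by ring
    _ = ∑ i, (∑ j, |A i j|) * x i ^ 2 := by
        rw [hswap, add_self_div_two]
        simp only [Finset.sum_mul]
    _ ≤ ∑ i, R * x i ^ 2 :=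
        Finset.sum_le_sum fun i _ => mul_le_mul_of_nonneg_right (hR i) (sq_nonneg _)
    _ = R * (x ⬝ᵥ x) := by simp only [dotProduct, Finset.mul_sum, sq]

section Entrywise

variable {N : ℕ}

theorem abs_le_maxNorm (M : Matrix (Fin N) (Fin N) ℝ) (i j : Fin N) : |M i j| ≤ maxNorm M :=
  (le_ciSup (Set.finite_range _).bddAbove j).trans
    (le_ciSup (f := fun i => ⨆ j, |M i j|) (Set.finite_range _).bddAbove i)

theorem maxNorm_nonneg (M : Matrix (Fin N) (Fin N) ℝ) : 0 ≤ maxNorm M :=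
  Real.iSup_nonneg fun _ => Real.iSup_nonneg fun _ => abs_nonneg _

theorem card_filter_ne_zero_le_rowNnz (M : Matrix (Fin N) (Fin N) ℝ) (i : Fin N) :
    (Finset.univ.filter fun j => M i j ≠ 0).card ≤ rowNnz M :=
  Finset.le_sup (f := fun i => (Finset.univ.filter fun j => M i j ≠ 0).card) (Finset.mem_univ i)

theorem sum_abs_le_rowNnz_mul_maxNorm (M : Matrix (Fin N) (Fin N) ℝ) (i : Fin N) :
    ∑ j, |M i j| ≤ rowNnz M * maxNorm M :=
  calc ∑ j, |M i j| = ∑ j ∈ Finset.univ.filter fun j => M i j ≠ 0, |M i j| :=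
        (Finset.sum_filter_of_ne fun j _ h => abs_ne_zero.1 h).symm
    _ ≤ (Finset.univ.filter fun j => M i j ≠ 0).card * maxNorm M := by
        rw [← nsmul_eq_mul]
        exact Finset.sum_le_card_nsmul _ _ _ fun j _ => abs_le_maxNorm M i j
    _ ≤ rowNnz M * maxNorm M := by
        gcongr
        · exact maxNorm_nonneg M
        · exact card_filter_ne_zero_le_rowNnz M i

end Entrywise

theorem stmt1_general {N : ℕ} (M N' : Matrix (Fin N) (Fin N) ℝ)
    (hM : M.IsHermitian) (hN' : N'.IsHermitian) (k : Fin N) :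
    |sortedEig hM k - sortedEig hN' k| ≤ (rowNnz (M - N') : ℝ) * maxNorm (M - N') := by
  have hform : ∀ x, |x ⬝ᵥ M *ᵥ x - x ⬝ᵥ N' *ᵥ x| ≤
      (rowNnz (M - N') : ℝ) * maxNorm (M - N') * (x ⬝ᵥ x) := fun x => by
    rw [← dotProduct_sub, ← sub_mulVec]
    exact (isHermitian_iff_isSymm.1 (hM.sub hN')).abs_dotProduct_mulVec_le
      (sum_abs_le_rowNnz_mul_maxNorm _) x
  rw [abs_sub_le_iff, sub_le_iff_le_add', sub_le_iff_le_add']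
  constructor
  · refine hM.sortedEig_le_add hN' (fun x => ?_) k
    linarith [(abs_le.1 (hform x)).2]
  · refine hN'.sortedEig_le_add hM (fun x => ?_) k
    linarith [(abs_le.1 (hform x)).1]

/-- For real symmetric matrices `M`, `N'`, the `k`-th smallest eigenvalues satisfy
`|λ_k(M) − λ_k(N')| ≤ ℓ(M − N') · ‖M − N'‖_max`. -/
theorem stmt1 {N : ℕ} (hN : 1 ≤ N) (M N' : Matrix (Fin N) (Fin N) ℝ)
    (hM : M.IsHermitian) (hN' : N'.IsHermitian) (k : Fin N) :
    |sortedEig hM k - sortedEig hN' k| ≤ (rowNnz (M - N') : ℝ) * maxNorm (M - N') :=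
  stmt1_general M N' hM hN' k
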